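/- Let β₀ ∈ L²(T₁×T₂). The following three statements are equivalent: (a) the random element ε := Y − L_Xβ₀ of L²(T₂) satisfies E[⟨v,ε⟩] = 0 and E[⟨u,X⟩⟨v,ε⟩] = 0 for all u ∈ L²(T₁), v ∈ L²(T₂) (i.e., the pair (X,Y) satisfies the functional linear model with parameter function β₀); (b) Γ_XX β₀ = r_XY (β₀ solves the functional population normal equation); (c) E‖Y − L_Xβ₀‖² ≤ E‖Y − L_Xβ‖² for every β ∈ L²(T₁×T₂). -/

import Mathlib

/-!
Everything is reduced to the kernel `K = E[X ⊗ ε]` in `L²(T₁×T₂)` of the error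
`ε = Y - T_{β₀} X`. Pairing with elementary tensors gives `⟪u ⊗ v, K⟫ = E[⟪u, X⟫ ⟪v, ε⟫]`, and
elementary tensors are total in `L²(T₁×T₂)` (a function whose integrals over all rectangles vanish
is zero), so (a) says `K = 0`; its mean-zero half is automatic because `X` and `Y` are centred.
Since `Γ_XX` is self-adjoint, `Γ_XX β = E[X ⊗ T_β X]`, while `r_XY = E[X ⊗ Y]`; hence
`r_XY - Γ_XX β₀ = K`, which gives (a) ⇔ (b). Finally
`E‖Y - T_{β₀ + c} X‖² = E‖ε‖² - 2 ⟪c, K⟫ + E‖T_c X‖²`, a quadratic in `c` whose minimum is at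
`c = 0` exactly when `K = 0`, which gives (b) ⇔ (c).
-/

open MeasureTheory Filter
open scoped RealInnerProductSpace ENNReal NNReal Topology

noncomputable section

namespace FLR

/-- Lebesgue measure on the compact interval `[a, b] ⊆ ℝ`. -/
abbrev leb (a b : ℝ) : Measure ℝ := volume.restrict (Set.Icc a b)

variable {α β Ω : Type*} [MeasurableSpace α] [MeasurableSpace β] [MeasurableSpace Ω]

/-- The elementary tensor `u ⊗ v`, i.e. `(u ⊗ v)(s,t) = u s * v t`, as an element of
`L²(μ × ν)`. -/
def tensor {μ : Measure α} {ν : Measure β} [SigmaFinite μ] [SigmaFinite ν]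
    (u : Lp ℝ 2 μ) (v : Lp ℝ 2 ν) : Lp ℝ 2 (μ.prod ν) :=
  MemLp.toLp (fun p : α × β => u p.1 * v p.2) (by
    have hm : AEStronglyMeasurable (fun p : α × β => u p.1 * v p.2) (μ.prod ν) :=
      (Lp.aestronglyMeasurable u).comp_fst.mul (Lp.aestronglyMeasurable v).comp_snd
    rw [memLp_two_iff_integrable_sq hm]
    have h : (fun p : α × β => (u p.1 * v p.2) ^ 2)
        = fun p : α × β => ((u : α → ℝ) p.1) ^ 2 * ((v : β → ℝ) p.2) ^ 2 := by
      funext p; ring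
    rw [h]
    exact (Lp.memLp u).integrable_sq.mul_prod (Lp.memLp v).integrable_sq)

/-- Cross-covariance operator `R_{ZW} u = E[⟨u, W⟩ Z]` of a pair of random elements
(a Bochner integral). -/
def covOp {μ : Measure α} {ν : Measure β} (P : Measure Ω)
    (Z : Ω → Lp ℝ 2 μ) (W : Ω → Lp ℝ 2 ν) (u : Lp ℝ 2 ν) : Lp ℝ 2 μ :=
  ∫ ω, ⟪u, W ω⟫ • Z ω ∂P

/-- The integral operator `(T_b u)(t) = ∫ b(s,t) u(s) ds` with kernel `b ∈ L²(μ × ν)`;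
it maps `L²(μ)` into `L²(ν)`. -/
def intOp {μ : Measure α} {ν : Measure β} [SigmaFinite μ] [SigmaFinite ν]
    (b : Lp ℝ 2 (μ.prod ν)) (u : Lp ℝ 2 μ) : Lp ℝ 2 ν := by
  classical
  exact if h : MemLp (fun t : β => ∫ s, b (s, t) * u s ∂μ) 2 ν then h.toLp _ else 0

theorem L2.real_inner_eq_integral {μ : Measure α} (f g : Lp ℝ 2 μ) :
    ⟪f, g⟫ = ∫ x, f x * g x ∂μ := by
  simp [MeasureTheory.L2.inner_def, mul_comm]

theorem L2.real_inner_toLp {μ : Measure α} {f g : α → ℝ} (hf : MemLp f 2 μ) (hg : MemLp g 2 μ) :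
    ⟪hf.toLp f, hg.toLp g⟫ = ∫ x, f x * g x ∂μ := by
  rw [L2.real_inner_eq_integral]
  refine integral_congr_ae ?_
  filter_upwards [hf.coeFn_toLp, hg.coeFn_toLp] with x hfx hgx
  rw [hfx, hgx]

theorem sq_integral_mul_le {μ : Measure α} {f g : α → ℝ} (hf : MemLp f 2 μ) (hg : MemLp g 2 μ) :
    (∫ x, f x * g x ∂μ) ^ 2 ≤ (∫ x, f x ^ 2 ∂μ) * ∫ x, g x ^ 2 ∂μ := by
  simpa only [L2.real_inner_toLp, ← sq] using real_inner_mul_inner_self_le (hf.toLp f) (hg.toLp g)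

theorem ae_eq_zero_of_forall_setIntegral_prod_eq_zero {μ : Measure (α × β)} {f : α × β → ℝ}
    (hf : Integrable f μ) (h : ∀ ⦃s : Set α⦄, MeasurableSet s → ∀ ⦃t : Set β⦄, MeasurableSet t →
      ∫ x in s ×ˢ t, f x ∂μ = 0) :
    f =ᵐ[μ] 0 := by
  have hpos_neg : (fun x => ENNReal.ofReal (f x)) =ᵐ[μ] fun x => ENNReal.ofReal (-f x) := by
    refine ae_eq_of_setLIntegral_prod_eq hf.1.aemeasurable.ennreal_ofReal
      hf.1.aemeasurable.neg.ennreal_ofReal hf.lintegral_lt_top.ne fun s hs t ht => ?_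
    have hst := h hs ht
    rw [integral_eq_lintegral_pos_part_sub_lintegral_neg_part hf.integrableOn, sub_eq_zero] at hst
    exact (ENNReal.toReal_eq_toReal_iff' hf.integrableOn.setLIntegral_lt_top.ne
      hf.neg.integrableOn.setLIntegral_lt_top.ne).1 hst
  filter_upwards [hpos_neg] with x hx
  rcases le_total 0 (f x) with h0 | h0
  · rw [ENNReal.ofReal_of_nonpos (neg_nonpos.2 h0), ENNReal.ofReal_eq_zero] at hx
    exact le_antisymm hx h0
  · rw [ENNReal.ofReal_of_nonpos h0, eq_comm, ENNReal.ofReal_eq_zero, neg_nonpos] at hx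
    exact le_antisymm h0 hx

section Tensor

variable {μ : Measure α} {ν : Measure β} [SigmaFinite μ] [SigmaFinite ν]

theorem tensor_coeFn (u : Lp ℝ 2 μ) (v : Lp ℝ 2 ν) :
    ⇑(tensor u v) =ᵐ[μ.prod ν] fun p => u p.1 * v p.2 :=
  MemLp.coeFn_toLp _

theorem inner_tensor_tensor (u u' : Lp ℝ 2 μ) (v v' : Lp ℝ 2 ν) :
    ⟪tensor u v, tensor u' v'⟫ = ⟪u, u'⟫ * ⟪v, v'⟫ := by
  simp only [L2.real_inner_eq_integral]
  rw [← integral_prod_mul]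
  refine integral_congr_ae ?_
  filter_upwards [tensor_coeFn u v, tensor_coeFn u' v'] with p h h'
  rw [h, h']
  ring

theorem norm_tensor (u : Lp ℝ 2 μ) (v : Lp ℝ 2 ν) : ‖tensor u v‖ = ‖u‖ * ‖v‖ := by
  have h := inner_tensor_tensor u u v v
  simp only [real_inner_self_eq_norm_sq, ← mul_pow] at h
  exact (pow_left_inj₀ (norm_nonneg _) (by positivity) two_ne_zero).1 h

theorem tensor_add_left (u u' : Lp ℝ 2 μ) (v : Lp ℝ 2 ν) :
    tensor (u + u') v = tensor u v + tensor u' v := by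
  apply Lp.ext
  filter_upwards [tensor_coeFn (u + u') v, tensor_coeFn u v, tensor_coeFn u' v,
    Lp.coeFn_add (tensor u v) (tensor u' v),
    Measure.quasiMeasurePreserving_fst.ae_eq_comp (Lp.coeFn_add u u')] with p h h₁ h₂ hs hu
  simp only [h, hs, Pi.add_apply, h₁, h₂, Function.comp_apply] at hu ⊢
  rw [hu]
  ring

theorem tensor_smul_left (c : ℝ) (u : Lp ℝ 2 μ) (v : Lp ℝ 2 ν) :
    tensor (c • u) v = c • tensor u v := by
  apply Lp.ext
  filter_upwards [tensor_coeFn (c • u) v, tensor_coeFn u v, Lp.coeFn_smul c (tensor u v),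
    Measure.quasiMeasurePreserving_fst.ae_eq_comp (Lp.coeFn_smul c u)] with p h h₁ hs hu
  simp only [h, hs, Pi.smul_apply, h₁, Function.comp_apply, smul_eq_mul] at hu ⊢
  rw [hu]
  ring

theorem tensor_add_right (u : Lp ℝ 2 μ) (v v' : Lp ℝ 2 ν) :
    tensor u (v + v') = tensor u v + tensor u v' := by
  apply Lp.ext
  filter_upwards [tensor_coeFn u (v + v'), tensor_coeFn u v, tensor_coeFn u v',
    Lp.coeFn_add (tensor u v) (tensor u v'),
    Measure.quasiMeasurePreserving_snd.ae_eq_comp (Lp.coeFn_add v v')] with p h h₁ h₂ hs hv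
  simp only [h, hs, Pi.add_apply, h₁, h₂, Function.comp_apply] at hv ⊢
  rw [hv]
  ring

theorem tensor_smul_right (c : ℝ) (u : Lp ℝ 2 μ) (v : Lp ℝ 2 ν) :
    tensor u (c • v) = c • tensor u v := by
  apply Lp.ext
  filter_upwards [tensor_coeFn u (c • v), tensor_coeFn u v, Lp.coeFn_smul c (tensor u v),
    Measure.quasiMeasurePreserving_snd.ae_eq_comp (Lp.coeFn_smul c v)] with p h h₁ hs hv
  simp only [h, hs, Pi.smul_apply, h₁, Function.comp_apply, smul_eq_mul] at hv ⊢
  rw [hv]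
  ring

variable (μ ν) in
def tensorCLM : Lp ℝ 2 μ →L[ℝ] Lp ℝ 2 ν →L[ℝ] Lp ℝ 2 (μ.prod ν) :=
  LinearMap.mkContinuous₂
    (LinearMap.mk₂ ℝ tensor tensor_add_left tensor_smul_left tensor_add_right tensor_smul_right)
    1 fun u v => by simp [norm_tensor]

theorem tensor_sub_right (u : Lp ℝ 2 μ) (v v' : Lp ℝ 2 ν) :
    tensor u (v - v') = tensor u v - tensor u v' :=
  map_sub (tensorCLM μ ν u) v v'

theorem tensor_indicatorConstLp_one {s : Set α} {t : Set β} (hs : MeasurableSet s)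
    (ht : MeasurableSet t) (hμs : μ s ≠ ∞) (hνt : ν t ≠ ∞) :
    tensor (indicatorConstLp 2 hs hμs (1 : ℝ)) (indicatorConstLp 2 ht hνt (1 : ℝ)) =
      indicatorConstLp 2 (hs.prod ht) (by rw [Measure.prod_prod]; finiteness) (1 : ℝ) := by
  apply Lp.ext
  filter_upwards [tensor_coeFn (indicatorConstLp 2 hs hμs (1 : ℝ)) (indicatorConstLp 2 ht hνt 1),
    indicatorConstLp_coeFn (p := 2) (hs := hs.prod ht) (c := (1 : ℝ)),
    Measure.quasiMeasurePreserving_fst.ae_eq_comp (indicatorConstLp_coeFn (p := 2) (hs := hs)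
      (hμs := hμs) (c := (1 : ℝ))),
    Measure.quasiMeasurePreserving_snd.ae_eq_comp (indicatorConstLp_coeFn (p := 2) (hs := ht)
      (hμs := hνt) (c := (1 : ℝ)))] with p h hst hs' ht'
  simp only [Function.comp_apply] at hs' ht'
  rw [h, hst, hs', ht']
  exact (Set.indicator_prod_one (i := p.1) (j := p.2)).symm

end Tensor

section Orthogonality

variable {μ : Measure α} {ν : Measure β} [IsFiniteMeasure μ] [IsFiniteMeasure ν]

theorem eq_zero_of_forall_inner_tensor_eq_zero {w : Lp ℝ 2 (μ.prod ν)}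
    (h : ∀ u v, ⟪tensor u v, w⟫ = 0) : w = 0 := by
  refine Lp.eq_zero_iff_ae_eq_zero.2 <|
    ae_eq_zero_of_forall_setIntegral_prod_eq_zero ((Lp.memLp w).integrable one_le_two)
      fun s hs t ht => ?_
  rw [← L2.inner_indicatorConstLp_one (hs.prod ht) (measure_ne_top _ _),
    ← tensor_indicatorConstLp_one hs ht (measure_ne_top _ _) (measure_ne_top _ _)]
  exact h _ _

theorem ext_inner_tensor {w w' : Lp ℝ 2 (μ.prod ν)}
    (h : ∀ u v, ⟪tensor u v, w⟫ = ⟪tensor u v, w'⟫) : w = w' :=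
  sub_eq_zero.1 <| eq_zero_of_forall_inner_tensor_eq_zero fun u v => by
    rw [inner_sub_right, h, sub_self]

theorem _root_.ContinuousLinearMap.ext_tensor {F : Type*} [NormedAddCommGroup F]
    [InnerProductSpace ℝ F] [CompleteSpace F] {A B : Lp ℝ 2 (μ.prod ν) →L[ℝ] F}
    (h : ∀ u v, A (tensor u v) = B (tensor u v)) : A = B := by
  have hadj : ContinuousLinearMap.adjoint (A - B) = 0 := by
    ext f : 1
    refine eq_zero_of_forall_inner_tensor_eq_zero fun u v => ?_
    rw [ContinuousLinearMap.adjoint_inner_right, sub_apply, h, sub_self, inner_zero_left]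
  rw [← sub_eq_zero, ← ContinuousLinearMap.adjoint_adjoint (A - B), hadj, map_zero]

theorem isSelfAdjoint_of_apply_tensor {Γ : Lp ℝ 2 (μ.prod ν) →L[ℝ] Lp ℝ 2 (μ.prod ν)}
    {A : Lp ℝ 2 μ → Lp ℝ 2 μ} (hA : ∀ u u', ⟪A u, u'⟫ = ⟪u, A u'⟫)
    (hΓ : ∀ u v, Γ (tensor u v) = tensor (A u) v) : IsSelfAdjoint Γ :=
  ContinuousLinearMap.isSelfAdjoint_iff'.2 <| ContinuousLinearMap.ext_tensor fun u v =>
    ext_inner_tensor fun u' v' => by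
      rw [ContinuousLinearMap.adjoint_inner_right, hΓ, hΓ, inner_tensor_tensor,
        inner_tensor_tensor, hA]

end Orthogonality

section IntOp

variable {μ : Measure α} {ν : Measure β} [SigmaFinite μ] [SigmaFinite ν]

theorem memLp_integral_kernel_mul (b : Lp ℝ 2 (μ.prod ν)) (u : Lp ℝ 2 μ) :
    MemLp (fun t => ∫ s, b (s, t) * u s ∂μ) 2 ν := by
  have hb : AEStronglyMeasurable (fun q : β × α => b (q.2, q.1)) (ν.prod μ) :=
    (Lp.aestronglyMeasurable b).prod_swap
  have hb2 : Integrable (fun q : β × α => b (q.2, q.1) ^ 2) (ν.prod μ) :=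
    ((memLp_two_iff_integrable_sq (Lp.aestronglyMeasurable b)).1 (Lp.memLp b)).swap
  have hF : AEStronglyMeasurable (fun t => ∫ s, b (s, t) * u s ∂μ) ν :=
    (hb.mul (Lp.aestronglyMeasurable u).comp_snd).integral_prod_right'
  have hbound : ∀ᵐ t ∂ν, ‖(∫ s, b (s, t) * u s ∂μ) ^ 2‖ ≤
      (∫ s, b (s, t) ^ 2 ∂μ) * ∫ s, u s ^ 2 ∂μ := by
    filter_upwards [hb2.prod_right_ae, hb.prodMk_left] with t hint hmeas
    rw [Real.norm_of_nonneg (sq_nonneg _)]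
    exact sq_integral_mul_le ((memLp_two_iff_integrable_sq hmeas).2 hint) (Lp.memLp u)
  rw [memLp_two_iff_integrable_sq hF]
  exact (hb2.integral_prod_left.mul_const _).mono' (hF.pow 2) hbound

theorem intOp_coeFn (b : Lp ℝ 2 (μ.prod ν)) (u : Lp ℝ 2 μ) :
    ⇑(intOp b u) =ᵐ[ν] fun t => ∫ s, b (s, t) * u s ∂μ := by
  rw [intOp, dif_pos (memLp_integral_kernel_mul b u)]
  exact MemLp.coeFn_toLp _

theorem inner_intOp (b : Lp ℝ 2 (μ.prod ν)) (u : Lp ℝ 2 μ) (v : Lp ℝ 2 ν) :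
    ⟪intOp b u, v⟫ = ⟪b, tensor u v⟫ := by
  have hint : Integrable (fun p : α × β => b p * (u p.1 * v p.2)) (μ.prod ν) := by
    refine (L2.integrable_inner (𝕜 := ℝ) (tensor u v) b).congr ?_
    filter_upwards [tensor_coeFn u v] with p hp
    simp [hp, mul_comm]
  have hrhs : ⟪b, tensor u v⟫ = ∫ p, b p * (u p.1 * v p.2) ∂(μ.prod ν) := by
    rw [L2.real_inner_eq_integral]
    refine integral_congr_ae ?_
    filter_upwards [tensor_coeFn u v] with p hp
    rw [hp]
  rw [hrhs, integral_prod_symm _ hint, L2.real_inner_eq_integral]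
  refine integral_congr_ae ?_
  filter_upwards [intOp_coeFn b u] with t ht
  rw [ht, ← integral_mul_const]
  simp only [mul_assoc]

theorem intOp_add_left (b b' : Lp ℝ 2 (μ.prod ν)) (u : Lp ℝ 2 μ) :
    intOp (b + b') u = intOp b u + intOp b' u :=
  ext_inner_right ℝ fun v => by simp only [inner_add_left, inner_intOp]

theorem intOp_sub_left (b b' : Lp ℝ 2 (μ.prod ν)) (u : Lp ℝ 2 μ) :
    intOp (b - b') u = intOp b u - intOp b' u :=
  ext_inner_right ℝ fun v => by simp only [inner_sub_left, inner_intOp]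

theorem intOp_smul_left (c : ℝ) (b : Lp ℝ 2 (μ.prod ν)) (u : Lp ℝ 2 μ) :
    intOp (c • b) u = c • intOp b u :=
  ext_inner_right ℝ fun v => by simp only [real_inner_smul_left, inner_intOp]

theorem intOp_add_right (b : Lp ℝ 2 (μ.prod ν)) (u u' : Lp ℝ 2 μ) :
    intOp b (u + u') = intOp b u + intOp b u' :=
  ext_inner_right ℝ fun v => by simp only [inner_add_left, inner_intOp, tensor_add_left,
    inner_add_right]

theorem intOp_smul_right (b : Lp ℝ 2 (μ.prod ν)) (c : ℝ) (u : Lp ℝ 2 μ) :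
    intOp b (c • u) = c • intOp b u :=
  ext_inner_right ℝ fun v => by simp only [real_inner_smul_left, inner_intOp, tensor_smul_left,
    real_inner_smul_right]

theorem norm_intOp_le (b : Lp ℝ 2 (μ.prod ν)) (u : Lp ℝ 2 μ) : ‖intOp b u‖ ≤ ‖b‖ * ‖u‖ := by
  have h : ‖intOp b u‖ ^ 2 ≤ ‖b‖ * ‖u‖ * ‖intOp b u‖ := by
    rw [← real_inner_self_eq_norm_sq, inner_intOp, mul_assoc, ← norm_tensor]
    exact real_inner_le_norm _ _
  nlinarith [mul_nonneg (norm_nonneg b) (norm_nonneg u)]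

def intOpCLM (b : Lp ℝ 2 (μ.prod ν)) : Lp ℝ 2 μ →L[ℝ] Lp ℝ 2 ν :=
  LinearMap.mkContinuous ⟨⟨intOp b, intOp_add_right b⟩, intOp_smul_right b⟩ ‖b‖ (norm_intOp_le b)

@[simp] theorem intOpCLM_apply (b : Lp ℝ 2 (μ.prod ν)) (u : Lp ℝ 2 μ) :
    intOpCLM b u = intOp b u := rfl

end IntOp

section RandomElements

variable {P : Measure Ω}

theorem _root_.MeasureTheory.MemLp.integrable_inner {E : Type*} [NormedAddCommGroup E]
    [InnerProductSpace ℝ E] {U V : Ω → E} (hU : MemLp U 2 P) (hV : MemLp V 2 P) :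
    Integrable (fun ω => ⟪U ω, V ω⟫) P :=
  memLp_one_iff_integrable.1 <| hU.of_bilin (fun x y => ⟪x, y⟫) 1 hV (hU.1.inner hV.1)
    (.of_forall fun ω => by simpa using nnnorm_inner_le_nnnorm (U ω) (V ω))

theorem _root_.MeasureTheory.MemLp.integrable_inner_smul {E F : Type*} [NormedAddCommGroup E]
    [InnerProductSpace ℝ E] [NormedAddCommGroup F] [NormedSpace ℝ F] {Z : Ω → F} {W : Ω → E}
    (hZ : MemLp Z 2 P) (hW : MemLp W 2 P) (v : E) : Integrable (fun ω => ⟪v, W ω⟫ • Z ω) P :=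
  memLp_one_iff_integrable.1 <| hZ.smul ((innerSL ℝ v).comp_memLp' hW)

theorem integral_norm_sub_sq {E : Type*} [NormedAddCommGroup E] [InnerProductSpace ℝ E]
    {U V : Ω → E} (hU : MemLp U 2 P) (hV : MemLp V 2 P) :
    ∫ ω, ‖U ω - V ω‖ ^ 2 ∂P =
      ∫ ω, ‖U ω‖ ^ 2 ∂P - 2 * ∫ ω, ⟪U ω, V ω⟫ ∂P + ∫ ω, ‖V ω‖ ^ 2 ∂P := by
  have hU2 := (memLp_two_iff_integrable_sq_norm hU.1).1 hU
  have hV2 := (memLp_two_iff_integrable_sq_norm hV.1).1 hV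
  have hUV := (hU.integrable_inner hV).const_mul 2
  simp_rw [norm_sub_sq_real]
  rw [integral_add _ hV2, integral_sub hU2 hUV, integral_const_mul]
  exact hU2.sub hUV

variable {μ : Measure α} {ν : Measure β}

theorem inner_covOp {Z : Ω → Lp ℝ 2 μ} {W : Ω → Lp ℝ 2 ν} (hZ : MemLp Z 2 P)
    (hW : MemLp W 2 P) (v : Lp ℝ 2 ν) (u : Lp ℝ 2 μ) :
    ⟪covOp P Z W v, u⟫ = ∫ ω, ⟪u, Z ω⟫ * ⟪v, W ω⟫ ∂P := by
  rw [covOp, real_inner_comm, ← integral_inner (hZ.integrable_inner_smul hW v)]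
  simp_rw [real_inner_smul_right, mul_comm]

theorem inner_covOp_self_comm {Z : Ω → Lp ℝ 2 μ} (hZ : MemLp Z 2 P) (u u' : Lp ℝ 2 μ) :
    ⟪covOp P Z Z u, u'⟫ = ⟪u, covOp P Z Z u'⟫ := by
  rw [inner_covOp hZ hZ, real_inner_comm, inner_covOp hZ hZ]
  simp_rw [mul_comm]

theorem _root_.ContinuousLinearMap.map_covOp {γ : Type*} [MeasurableSpace γ] {ρ : Measure γ}
    (L : Lp ℝ 2 μ →L[ℝ] Lp ℝ 2 ρ) {Z : Ω → Lp ℝ 2 μ} {W : Ω → Lp ℝ 2 ν} (hZ : MemLp Z 2 P)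
    (hW : MemLp W 2 P) (v : Lp ℝ 2 ν) : L (covOp P Z W v) = covOp P (fun ω => L (Z ω)) W v := by
  simp only [covOp, ← map_smul]
  exact (L.integral_comp_comm (hZ.integrable_inner_smul hW v)).symm

variable [SigmaFinite μ] [SigmaFinite ν]

theorem integral_inner_intOp_eq_zero {Z : Ω → Lp ℝ 2 μ}
    (hZ0 : ∀ u, ∫ ω, ⟪u, Z ω⟫ ∂P = 0) (b : Lp ℝ 2 (μ.prod ν)) (v : Lp ℝ 2 ν) :
    ∫ ω, ⟪v, intOp b (Z ω)⟫ ∂P = 0 := by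
  simp_rw [← intOpCLM_apply, ← ContinuousLinearMap.adjoint_inner_left]
  exact hZ0 _

theorem memLp_intOp_comp {Z : Ω → Lp ℝ 2 μ} (hZ : MemLp Z 2 P) (b : Lp ℝ 2 (μ.prod ν)) :
    MemLp (fun ω => intOp b (Z ω)) 2 P :=
  (intOpCLM b).comp_memLp' hZ

theorem integrable_tensor {Z : Ω → Lp ℝ 2 μ} {W : Ω → Lp ℝ 2 ν} (hZ : MemLp Z 2 P)
    (hW : MemLp W 2 P) : Integrable (fun ω => tensor (Z ω) (W ω)) P :=
  memLp_one_iff_integrable.1 <| hZ.of_bilin tensor 1 hW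
    ((tensorCLM μ ν).isBoundedBilinearMap.continuous.comp_aestronglyMeasurable (hZ.1.prodMk hW.1))
    (.of_forall fun ω => by simp [← NNReal.coe_le_coe, norm_tensor])

variable (P) in
def crossCovKernel (Z : Ω → Lp ℝ 2 μ) (W : Ω → Lp ℝ 2 ν) : Lp ℝ 2 (μ.prod ν) :=
  ∫ ω, tensor (Z ω) (W ω) ∂P

variable {Z : Ω → Lp ℝ 2 μ} {W : Ω → Lp ℝ 2 ν}

theorem inner_crossCovKernel (hZ : MemLp Z 2 P) (hW : MemLp W 2 P) (b : Lp ℝ 2 (μ.prod ν)) :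
    ⟪b, crossCovKernel P Z W⟫ = ∫ ω, ⟪W ω, intOp b (Z ω)⟫ ∂P := by
  rw [crossCovKernel, ← integral_inner (integrable_tensor hZ hW)]
  simp_rw [← inner_intOp, real_inner_comm]

theorem inner_tensor_crossCovKernel (hZ : MemLp Z 2 P) (hW : MemLp W 2 P) (u : Lp ℝ 2 μ)
    (v : Lp ℝ 2 ν) :
    ⟪tensor u v, crossCovKernel P Z W⟫ = ∫ ω, ⟪u, Z ω⟫ * ⟪v, W ω⟫ ∂P := by
  rw [crossCovKernel, ← integral_inner (integrable_tensor hZ hW)]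
  simp_rw [inner_tensor_tensor]

theorem crossCovKernel_sub (hZ : MemLp Z 2 P) (hW : MemLp W 2 P) {W' : Ω → Lp ℝ 2 ν}
    (hW' : MemLp W' 2 P) :
    crossCovKernel P Z (fun ω => W ω - W' ω) = crossCovKernel P Z W - crossCovKernel P Z W' := by
  simp only [crossCovKernel, tensor_sub_right]
  exact integral_sub (integrable_tensor hZ hW) (integrable_tensor hZ hW')

theorem integral_norm_sub_intOp_sq (hZ : MemLp Z 2 P) (hW : MemLp W 2 P)
    (c : Lp ℝ 2 (μ.prod ν)) :
    ∫ ω, ‖W ω - intOp c (Z ω)‖ ^ 2 ∂P =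
      ∫ ω, ‖W ω‖ ^ 2 ∂P - 2 * ⟪c, crossCovKernel P Z W⟫ + ∫ ω, ‖intOp c (Z ω)‖ ^ 2 ∂P := by
  rw [integral_norm_sub_sq hW (memLp_intOp_comp hZ c), inner_crossCovKernel hZ hW]

theorem forall_integral_norm_sq_le_iff_crossCovKernel_eq_zero (hZ : MemLp Z 2 P)
    (hW : MemLp W 2 P) :
    (∀ c, ∫ ω, ‖W ω‖ ^ 2 ∂P ≤ ∫ ω, ‖W ω - intOp c (Z ω)‖ ^ 2 ∂P) ↔
      crossCovKernel P Z W = 0 := by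
  refine ⟨fun h => ?_, fun hK c => ?_⟩
  · set K := crossCovKernel P Z W with hK_def
    -- along the line `s • K` the excess risk is `q s² - 2 ‖K‖² s`, which must stay nonnegative
    set q := ∫ ω, ‖intOp K (Z ω)‖ ^ 2 ∂P
    have hquad : ∀ s : ℝ, 0 ≤ q * (s * s) + (-2 * ‖K‖ ^ 2) * s + 0 := fun s => by
      have hs := h (s • K)
      rw [integral_norm_sub_intOp_sq hZ hW] at hs
      simp only [intOp_smul_left, norm_smul, mul_pow,
        Real.norm_eq_abs, sq_abs, integral_const_mul, real_inner_smul_left] at hs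
      rw [← hK_def, real_inner_self_eq_norm_sq] at hs
      linarith
    have hdisc := discrim_le_zero hquad
    rw [discrim, mul_zero, sub_zero] at hdisc
    have hK : ‖K‖ ^ 2 = 0 := by nlinarith [sq_nonneg (‖K‖ ^ 2)]
    simpa using hK
  · rw [integral_norm_sub_intOp_sq hZ hW, hK, inner_zero_right, mul_zero, sub_zero]
    exact le_add_of_nonneg_right (integral_nonneg fun ω => sq_nonneg _)

variable [IsFiniteMeasure μ] [IsFiniteMeasure ν]

theorem crossCovKernel_eq_zero_iff (hZ : MemLp Z 2 P) (hW : MemLp W 2 P) :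
    crossCovKernel P Z W = 0 ↔ ∀ u v, ∫ ω, ⟪u, Z ω⟫ * ⟪v, W ω⟫ ∂P = 0 := by
  simp_rw [← inner_tensor_crossCovKernel hZ hW]
  exact ⟨fun h u v => by rw [h, inner_zero_right], eq_zero_of_forall_inner_tensor_eq_zero⟩

theorem apply_eq_crossCovKernel_of_apply_tensor (hZ : MemLp Z 2 P)
    {Γ : Lp ℝ 2 (μ.prod ν) →L[ℝ] Lp ℝ 2 (μ.prod ν)}
    (hΓ : ∀ u v, Γ (tensor u v) = tensor (covOp P Z Z u) v) (b : Lp ℝ 2 (μ.prod ν)) :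
    Γ b = crossCovKernel P Z (fun ω => intOp b (Z ω)) := by
  have hΓsymm := (isSelfAdjoint_of_apply_tensor (inner_covOp_self_comm hZ) hΓ).isSymmetric
  have hTZ := memLp_intOp_comp hZ b
  refine ext_inner_tensor fun u v => ?_
  rw [← ContinuousLinearMap.coe_coe Γ, ← hΓsymm, ContinuousLinearMap.coe_coe, hΓ, real_inner_comm,
    ← inner_intOp, ← intOpCLM_apply, (intOpCLM b).map_covOp hZ hZ]
  simp only [intOpCLM_apply]
  rw [inner_covOp hTZ hZ, inner_tensor_crossCovKernel hZ hTZ]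
  simp_rw [mul_comm]

end RandomElements

/-- Proposition 2.2: for `β₀ ∈ L²(T₁×T₂)`, the following are equivalent:
(a) `(X,Y)` satisfies the functional linear model with parameter function `β₀`, i.e. the
error `ε = Y - L_X β₀` has mean zero and is uncorrelated with `X`;
(b) `β₀` solves the functional population normal equation `Γ_XX β₀ = r_XY`;
(c) `β₀` minimizes `E‖Y - L_X β‖²` over `β ∈ L²(T₁×T₂)`. -/
theorem functional_linear_model_normal_equation_minimizer
    (a₁ b₁ a₂ b₂ : ℝ) {Ω : Type*} [MeasurableSpace Ω]
    (P : Measure Ω) [IsProbabilityMeasure P]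
    (X : Ω → Lp ℝ 2 (leb a₁ b₁)) (Y : Ω → Lp ℝ 2 (leb a₂ b₂))
    (hXm : AEStronglyMeasurable X P) (hYm : AEStronglyMeasurable Y P)
    (hX2 : Integrable (fun ω => ‖X ω‖ ^ 2) P) (hY2 : Integrable (fun ω => ‖Y ω‖ ^ 2) P)
    (hX0 : ∀ u, ∫ ω, ⟪u, X ω⟫ ∂P = 0) (hY0 : ∀ v, ∫ ω, ⟪v, Y ω⟫ ∂P = 0)
    (Γ : Lp ℝ 2 ((leb a₁ b₁).prod (leb a₂ b₂)) →L[ℝ] Lp ℝ 2 ((leb a₁ b₁).prod (leb a₂ b₂)))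
    (hΓ : ∀ (u : Lp ℝ 2 (leb a₁ b₁)) (v : Lp ℝ 2 (leb a₂ b₂)), Γ (tensor u v) = tensor (covOp P X X u) v)
    (rXY : Lp ℝ 2 ((leb a₁ b₁).prod (leb a₂ b₂)))
    (hrXY : ∀ (u : Lp ℝ 2 (leb a₁ b₁)) (v : Lp ℝ 2 (leb a₂ b₂)), ⟪rXY, tensor u v⟫ = ⟪covOp P X Y v, u⟫)
    (β₀ : Lp ℝ 2 ((leb a₁ b₁).prod (leb a₂ b₂))) :
    (((∀ v, ∫ ω, ⟪v, Y ω - intOp β₀ (X ω)⟫ ∂P = 0) ∧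
        (∀ u v, ∫ ω, ⟪u, X ω⟫ * ⟪v, Y ω - intOp β₀ (X ω)⟫ ∂P = 0)) ↔
      Γ β₀ = rXY) ∧
    (Γ β₀ = rXY ↔
      (∀ b, ∫ ω, ‖Y ω - intOp β₀ (X ω)‖ ^ 2 ∂P ≤ ∫ ω, ‖Y ω - intOp b (X ω)‖ ^ 2 ∂P)) := by
  have hX : MemLp X 2 P := (memLp_two_iff_integrable_sq_norm hXm).2 hX2
  have hY : MemLp Y 2 P := (memLp_two_iff_integrable_sq_norm hYm).2 hY2
  have hTX := memLp_intOp_comp hX β₀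
  have hε : MemLp (fun ω => Y ω - intOp β₀ (X ω)) 2 P := hY.sub hTX
  have hmean : ∀ v, ∫ ω, ⟪v, Y ω - intOp β₀ (X ω)⟫ ∂P = 0 := fun v => by
    simp only [inner_sub_right]
    rw [integral_sub ((hY.integrable one_le_two).const_inner v)
      ((hTX.integrable one_le_two).const_inner v), hY0, integral_inner_intOp_eq_zero hX0, sub_zero]
  have hr : rXY = crossCovKernel P X Y := ext_inner_tensor fun u v => by
    rw [real_inner_comm, hrXY, inner_covOp hX hY, inner_tensor_crossCovKernel hX hY]
  have hnormal : Γ β₀ = rXY ↔ crossCovKernel P X (fun ω => Y ω - intOp β₀ (X ω)) = 0 := by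
    rw [crossCovKernel_sub hX hY hTX, ← hr, ← apply_eq_crossCovKernel_of_apply_tensor hX hΓ,
      sub_eq_zero, eq_comm]
  refine ⟨?_, ?_⟩
  · rw [hnormal, crossCovKernel_eq_zero_iff hX hε]
    exact ⟨And.right, fun h => ⟨hmean, h⟩⟩
  · rw [hnormal, ← forall_integral_norm_sq_le_iff_crossCovKernel_eq_zero hX hε]
    refine ⟨fun h b => ?_, fun h c => ?_⟩
    · simpa only [intOp_sub_left, sub_sub_sub_cancel_right] using h (b - β₀)
    · simpa only [intOp_add_left, sub_add_eq_sub_sub] using h (β₀ + c)
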